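/- Let Σ_1, …, Σ_m be p×p real symmetric matrices whose linear span H has dimension d with 1 ≤ d ≤ m, in the space of p×p real symmetric matrices with inner product ⟨A,B⟩ = tr(AB)/p. Let Σ be any p×p real symmetric matrix with orthogonal decomposition Σ = Σ₀ + Σ_⊥, Σ₀ ∈ H, Σ_⊥ ∈ H^⊥. Define M^{(d)}(Σ) = C(m,d)^{-1} Σ_{J} det of the (d+1)×(d+1) Gram matrix of (Σ, Σ_{i_1},…,Σ_{i_d}), where the sum runs over all d-element subsets J = {i_1<⋯<i_d} of {1,…,m}. Then M^{(d)}(Σ) = M^{(d)}·⟨Σ_⊥, Σ_⊥⟩. -/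

import Mathlib

open Matrix MeasureTheory ProbabilityTheory Filter Finset

namespace PaperDefs

/-- Sample covariance matrix `S = n⁻¹ ∑ x_k x_kᵀ` from data `x 0, …, x (nn-1)`. -/
noncomputable def sampleCov (p nn : ℕ) (x : ℕ → Fin p → ℝ) : Matrix (Fin p) (Fin p) ℝ :=
  (nn : ℝ)⁻¹ • ∑ k ∈ Finset.range nn, Matrix.vecMulVec (x k) (x k)

/-- The estimator `η̂₄` built from the data. -/
noncomputable def etaHat (p nn : ℕ) (x : ℕ → Fin p → ℝ) : ℝ :=
  (((nn - 4).factorial : ℝ) / (4 * p * (nn.factorial : ℝ))) *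
    ∑ j1 ∈ Finset.range nn, ∑ j2 ∈ Finset.range nn, ∑ j3 ∈ Finset.range nn,
      ∑ j4 ∈ Finset.range nn,
        if j1 ≠ j2 ∧ j1 ≠ j3 ∧ j1 ≠ j4 ∧ j2 ≠ j3 ∧ j2 ≠ j4 ∧ j3 ≠ j4 then
          (dotProduct (x j1 - x j2) (x j1 - x j2)
            - dotProduct (x j3 - x j4) (x j3 - x j4)) ^ 2
        else 0

/-- Diagonal entry `Ĝ_{ii}` of the sample Gram matrix. -/
noncomputable def gHatDiag (p nn : ℕ) (x : ℕ → Fin p → ℝ) : ℝ :=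
  ((sampleCov p nn x * sampleCov p nn x).trace / p
      - ((p : ℝ) / nn) * ((sampleCov p nn x).trace / p) ^ 2
      - (((p : ℝ) / nn) / p - ((p : ℝ) / nn) ^ 2 / (p : ℝ) ^ 2) * etaHat p nn x) /
    ((1 - 2 * ((p : ℝ) / nn) / p) * (1 - ((p : ℝ) / nn) / p))

/-- The sample Gram matrix `Ĝ` built from data `x i k : Fin p → ℝ`, sample sizes `nn i`. -/
noncomputable def gHat (p : ℕ) (nn : ℕ → ℕ) (x : ℕ → ℕ → Fin p → ℝ) (i j : ℕ) : ℝ :=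
  if i = j then gHatDiag p (nn i) (x i)
  else (sampleCov p (nn i) (x i) * sampleCov p (nn j) (x j)).trace / p

/-- Determinant of the principal submatrix of `G` on the index set `s`. -/
noncomputable def subdet (G : ℕ → ℕ → ℝ) (s : Finset ℕ) : ℝ :=
  Matrix.det (Matrix.of fun i j : s => G i.1 j.1)

/-- `M^{(k)}`: average of the `k×k` principal minors of `G` over `k`-subsets of `{0,…,q-1}`. -/
noncomputable def Mavg (G : ℕ → ℕ → ℝ) (q k : ℕ) : ℝ :=
  ((q.choose k : ℝ))⁻¹ * ∑ s ∈ (Finset.range q).powersetCard k, subdet G s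

/-- Population Gram matrix entries `G_{ij} = tr(Σ_i Σ_j)/p`. -/
noncomputable def gramG (p : ℕ) (Sig : ℕ → Matrix (Fin p) (Fin p) ℝ) (i j : ℕ) : ℝ :=
  (Sig i * Sig j).trace / p

/-- `𝒟(A)`: the diagonal matrix with the same diagonal as `A`. -/
noncomputable def dgn {m : Type*} [DecidableEq m] (A : Matrix m m ℝ) : Matrix m m ℝ :=
  Matrix.diagonal fun i => A i i

/-- `μ(A₁, A₂ | Λ)` (with a given square root `ΛHalf` of `Λ`). -/
noncomputable def muBil (p : ℕ) (ν₄ : ℝ) (Lam LamHalf A1 A2 : Matrix (Fin p) (Fin p) ℝ) : ℝ :=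
  (2 / p) * (Lam * A1 * Lam * A2).trace
    + ((ν₄ - 3) / p) * (dgn (LamHalf * A1 * LamHalf) * dgn (LamHalf * A2 * LamHalf)).trace

/-- The (random) sample Gram matrix built from noise `z` and square roots `Sighalf`. -/
noncomputable def gHatRV (p : ℕ) (nn : ℕ → ℕ) {Ω : Type*}
    (Sighalf : ℕ → Matrix (Fin p) (Fin p) ℝ)
    (z : ℕ → ℕ → Fin p → Ω → ℝ) (ω : Ω) : ℕ → ℕ → ℝ :=
  gHat p nn fun i k => (Sighalf i).mulVec fun j => z i k j ω

/-- The (random) statistic `M̂^{(k)}`. -/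
noncomputable def mHatRV (p q : ℕ) (nn : ℕ → ℕ) {Ω : Type*}
    (Sighalf : ℕ → Matrix (Fin p) (Fin p) ℝ)
    (z : ℕ → ℕ → Fin p → Ω → ℝ) (k : ℕ) (ω : Ω) : ℝ :=
  Mavg (gHatRV p nn Sighalf z ω) q k

/-- `β_p = q⁻¹ ∑ᵢ c_{i,p}² G_{ii}²`. -/
noncomputable def betaP (p q : ℕ) (nn : ℕ → ℕ) (Sig : ℕ → Matrix (Fin p) (Fin p) ℝ) : ℝ :=
  (q : ℝ)⁻¹ * ∑ i ∈ Finset.range q, ((p : ℝ) / nn i) ^ 2 * (gramG p Sig i i) ^ 2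

/-- `β̂_p = q⁻¹ ∑ᵢ c_{i,p}² Ĝ_{ii}²`. -/
noncomputable def betaHatRV (p q : ℕ) (nn : ℕ → ℕ) {Ω : Type*}
    (Sighalf : ℕ → Matrix (Fin p) (Fin p) ℝ)
    (z : ℕ → ℕ → Fin p → Ω → ℝ) (ω : Ω) : ℝ :=
  (q : ℝ)⁻¹ * ∑ i ∈ Finset.range q, ((p : ℝ) / nn i) ^ 2 * (gHatRV p nn Sighalf z ω i i) ^ 2

/-- The "matrix determinant": Laplace expansion along the first row `(top, Σ_{j₁}, …, Σ_{j_d})`,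
the other rows being `(⟨Σ_{j_r}, top⟩, ⟨Σ_{j_r}, Σ_{j₁}⟩, …, ⟨Σ_{j_r}, Σ_{j_d}⟩)`, where
`J = {j₁ < ⋯ < j_d}` and `⟨A, B⟩ = tr(AB)/p`. -/
noncomputable def detRow (p d : ℕ) (Sig : ℕ → Matrix (Fin p) (Fin p) ℝ)
    (top : Matrix (Fin p) (Fin p) ℝ) (J : Finset ℕ) : Matrix (Fin p) (Fin p) ℝ :=
  if h : J.card = d then
    let j := J.orderEmbOfFin h
    let B : Fin (d + 1) → Matrix (Fin p) (Fin p) ℝ := Fin.cons top fun l => Sig (j l)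
    ∑ k : Fin (d + 1),
      ((-1 : ℝ) ^ (k : ℕ) *
        Matrix.det (Matrix.of fun r t : Fin d => (Sig (j r) * B (k.succAbove t)).trace / p)) • B k
  else 0

/-- The part `∑_{k=1}^{d} (-1)^{k+1} C_k(Σ;J) • Σ_{i_k}` of the Laplace expansion. -/
noncomputable def detRow0 (p d : ℕ) (Sig : ℕ → Matrix (Fin p) (Fin p) ℝ)
    (top : Matrix (Fin p) (Fin p) ℝ) (J : Finset ℕ) : Matrix (Fin p) (Fin p) ℝ :=
  if h : J.card = d then
    let j := J.orderEmbOfFin h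
    let B : Fin (d + 1) → Matrix (Fin p) (Fin p) ℝ := Fin.cons top fun l => Sig (j l)
    ∑ k : Fin d,
      ((-1 : ℝ) ^ (((k : ℕ) + 1) + 1) *
        Matrix.det (Matrix.of fun r t : Fin d =>
          (Sig (j r) * B ((k.succ : Fin (d + 1)).succAbove t)).trace / p)) • Sig (j k)
  else 0

/-- Determinant of the `(d+1)×(d+1)` Gram matrix of `(top, Σ_{i₁}, …, Σ_{i_d})`. -/
noncomputable def gramDetExt (p d : ℕ) (Sig : ℕ → Matrix (Fin p) (Fin p) ℝ)
    (top : Matrix (Fin p) (Fin p) ℝ) (J : Finset ℕ) : ℝ :=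
  if h : J.card = d then
    let j := J.orderEmbOfFin h
    let B : Fin (d + 1) → Matrix (Fin p) (Fin p) ℝ := Fin.cons top fun l => Sig (j l)
    Matrix.det (Matrix.of fun r s : Fin (d + 1) => (B r * B s).trace / p)
  else 0

/-- The matrix `R_i` from Theorem 2.1. -/
noncomputable def rMat (p q d : ℕ) (Sig : ℕ → Matrix (Fin p) (Fin p) ℝ) (i : ℕ) :
    Matrix (Fin p) (Fin p) ℝ :=
  (((q - 1).choose d : ℝ))⁻¹ •
    ∑ J ∈ ((Finset.range q).erase i).powersetCard d, detRow p d Sig (Sig i) J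

/-- `r_p^{(d₀)}` from Theorem 2.1. -/
noncomputable def rP (p q d : ℕ) (nn : ℕ → ℕ) (ν₄ : ℝ)
    (Sig Sighalf : ℕ → Matrix (Fin p) (Fin p) ℝ) : ℝ :=
  (q : ℝ)⁻¹ * ∑ i ∈ Finset.range q,
    ((p : ℝ) / nn i) *
      ((2 / p) * ((Sighalf i * rMat p q d Sig i * Sighalf i)
            * (Sighalf i * rMat p q d Sig i * Sighalf i)).trace
        + ((ν₄ - 3) / p) * (dgn (Sighalf i * rMat p q d Sig i * Sighalf i)
            * dgn (Sighalf i * rMat p q d Sig i * Sighalf i)).trace)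

end PaperDefs

namespace PaperDefs

/-- The (random) sample covariance matrix of a single sample. -/
noncomputable def sampleCovRV (p nn : ℕ) {Ω : Type*} (Sighalf : Matrix (Fin p) (Fin p) ℝ)
    (z : ℕ → Fin p → Ω → ℝ) (ω : Ω) : Matrix (Fin p) (Fin p) ℝ :=
  sampleCov p nn fun k => Sighalf.mulVec fun j => z k j ω

end PaperDefs

/-!
Fix `J`. If `Σ_{i₁}, …, Σ_{i_d}` are linearly dependent, both Gram determinants vanish. Otherwise
they span `H` (it has dimension `d`), so `Σ - Σ_⊥ = Σ₀` is a combination of them, and subtracting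
that combination from the first row does not change the determinant. The first row becomes
`(⟨Σ_⊥, Σ⟩, 0, …, 0)` with `⟨Σ_⊥, Σ⟩ = ⟨Σ_⊥, Σ_⊥⟩`, so expanding along it gives
`⟨Σ_⊥, Σ_⊥⟩` times the Gram determinant of `J`; averaging over `J` gives the identity.
-/

namespace LinearMap.BilinForm

variable {K M ι : Type*} [Field K] [AddCommGroup M] [Module K M]

/-- For `u = w` this is the Gram matrix of `u`. -/
def gramMatrix (β : LinearMap.BilinForm K M) (u w : ι → M) : Matrix ι ι K :=
  Matrix.of fun i j => β (u i) (w j)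

theorem det_gramMatrix_eq_zero_of_not_linearIndependent [Fintype ι] [DecidableEq ι]
    (β : LinearMap.BilinForm K M) {u : ι → M} (hu : ¬LinearIndependent K u) (w : ι → M) :
    (gramMatrix β u w).det = 0 := by
  obtain ⟨g, hg, i, hgi⟩ := Fintype.not_linearIndependent_iff.mp hu
  refine Matrix.exists_vecMul_eq_zero_iff.mp ⟨g, fun h => hgi (congrFun h i), ?_⟩
  ext j
  have : ∑ k, g k * β (u k) (w j) = β (∑ k, g k • u k) (w j) := by
    simp [LinearMap.sum_apply]
  simpa [gramMatrix, Matrix.vecMul, dotProduct, hg] using this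

theorem updateRow_gramMatrix_cons_zero {n : ℕ} (β : LinearMap.BilinForm K M) (v : Fin n → M)
    (y z : M) (w : Fin (n + 1) → M) :
    (gramMatrix β (Fin.cons y v) w).updateRow 0 (fun j => β z (w j)) =
      gramMatrix β (Fin.cons z v) w := by
  ext i j
  cases i using Fin.cases <;> simp [gramMatrix]

/-- Row `0` depends additively on `x₀ + y`, and the `x₀`-part has linearly dependent rows. -/
theorem det_gramMatrix_cons_add_of_mem_span {n : ℕ} (β : LinearMap.BilinForm K M) {v : Fin n → M}
    {x₀ : M} (hx₀ : x₀ ∈ Submodule.span K (Set.range v)) (y : M) (w : Fin (n + 1) → M) :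
    (gramMatrix β (Fin.cons (x₀ + y) v) w).det = (gramMatrix β (Fin.cons y v) w).det := by
  have hdep : ¬LinearIndependent K (Fin.cons x₀ v : Fin (n + 1) → M) := fun h =>
    (linearIndependent_finCons.mp h).2 hx₀
  rw [← updateRow_gramMatrix_cons_zero β v y (x₀ + y)]
  simp only [map_add, LinearMap.add_apply]
  rw [← Pi.add_def, Matrix.det_updateRow_add, updateRow_gramMatrix_cons_zero,
    updateRow_gramMatrix_cons_zero, det_gramMatrix_eq_zero_of_not_linearIndependent β hdep, zero_add]

theorem det_gramMatrix_cons_of_forall_eq_zero {n : ℕ} (β : LinearMap.BilinForm K M) {v : Fin n → M}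
    {y : M} (hy : ∀ t, β y (v t) = 0) (x : M) :
    (gramMatrix β (Fin.cons y v) (Fin.cons x v)).det = β y x * (gramMatrix β v v).det := by
  rw [Matrix.det_succ_row_zero, Fin.sum_univ_succ]
  simp [gramMatrix, hy, Matrix.submatrix]

theorem det_gramMatrix_cons_of_sub_mem_span {n : ℕ} (β : LinearMap.BilinForm K M)
    {v : Fin n → M} {x y : M} (hxy : x - y ∈ Submodule.span K (Set.range v))
    (hy : ∀ t, β y (v t) = 0) :
    (gramMatrix β (Fin.cons x v) (Fin.cons x v)).det = β y y * (gramMatrix β v v).det := by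
  have hy_span : Submodule.span K (Set.range v) ≤ LinearMap.ker (β y) :=
    Submodule.span_le.mpr (Set.range_subset_iff.mpr hy)
  have hyx : β y x = β y y := by
    simpa [sub_eq_zero] using hy_span hxy
  rw [← sub_add_cancel x y, det_gramMatrix_cons_add_of_mem_span β hxy,
    det_gramMatrix_cons_of_forall_eq_zero β hy, sub_add_cancel, hyx]

theorem det_gramMatrix_cons_of_finrank_eq {n : ℕ} (β : LinearMap.BilinForm K M)
    {H : Submodule K M} [FiniteDimensional K H] (hH : Module.finrank K H = n)
    {v : Fin n → M} (hv : ∀ t, v t ∈ H) {x y : M} (hxy : x - y ∈ H)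
    (hy : ∀ z ∈ H, β y z = 0) :
    (gramMatrix β (Fin.cons x v) (Fin.cons x v)).det = β y y * (gramMatrix β v v).det := by
  by_cases hli : LinearIndependent K v
  · have hspan : Submodule.span K (Set.range v) = H :=
      Submodule.eq_of_le_of_finrank_eq (Submodule.span_le.mpr (Set.range_subset_iff.mpr hv))
        (by rw [finrank_span_eq_card hli, Fintype.card_fin, hH])
    exact det_gramMatrix_cons_of_sub_mem_span β (hspan ▸ hxy) fun t => hy _ (hv t)
  · have hli' : ¬LinearIndependent K (Fin.cons x v : Fin (n + 1) → M) := fun h =>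
      hli (linearIndependent_finCons.mp h).1
    rw [det_gramMatrix_eq_zero_of_not_linearIndependent β hli,
      det_gramMatrix_eq_zero_of_not_linearIndependent β hli', mul_zero]

end LinearMap.BilinForm

namespace Matrix

noncomputable def normalizedTraceForm (n : Type*) [Fintype n] (c : ℝ) :
    LinearMap.BilinForm ℝ (Matrix n n ℝ) :=
  LinearMap.mk₂ ℝ (fun A B => (A * B).trace / c)
    (fun A₁ A₂ B => by simp [add_mul, add_div]) (fun a A B => by simp [mul_div_assoc])
    (fun A B₁ B₂ => by simp [mul_add, add_div]) (fun a A B => by simp [mul_div_assoc])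

@[simp]
theorem normalizedTraceForm_apply {n : Type*} [Fintype n] (c : ℝ) (A B : Matrix n n ℝ) :
    normalizedTraceForm n c A B = (A * B).trace / c :=
  rfl

end Matrix

namespace PaperDefs

open LinearMap.BilinForm

theorem gramDetExt_eq_det_gramMatrix (p d : ℕ) (Sig : ℕ → Matrix (Fin p) (Fin p) ℝ)
    (A : Matrix (Fin p) (Fin p) ℝ) {J : Finset ℕ} (hJ : J.card = d) :
    gramDetExt p d Sig A J =
      (gramMatrix (normalizedTraceForm (Fin p) p) (Fin.cons A (Sig ∘ J.orderEmbOfFin hJ))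
        (Fin.cons A (Sig ∘ J.orderEmbOfFin hJ))).det := by
  rw [gramDetExt, dif_pos hJ]
  rfl

theorem subdet_gramG_eq_det_gramMatrix (p d : ℕ) (Sig : ℕ → Matrix (Fin p) (Fin p) ℝ)
    {J : Finset ℕ} (hJ : J.card = d) :
    subdet (gramG p Sig) J =
      (gramMatrix (normalizedTraceForm (Fin p) p) (Sig ∘ J.orderEmbOfFin hJ)
        (Sig ∘ J.orderEmbOfFin hJ)).det := by
  rw [subdet, ← Matrix.det_submatrix_equiv_self (J.orderIsoOfFin hJ).toEquiv]
  rfl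

end PaperDefs

open LinearMap.BilinForm PaperDefs

theorem statement14_general (p m d : ℕ)
    (Sig : ℕ → Matrix (Fin p) (Fin p) ℝ)
    (hdim : Module.finrank ℝ (Submodule.span ℝ (Sig '' Set.Iio m)) = d)
    (A A0 Aperp : Matrix (Fin p) (Fin p) ℝ)
    (hA0 : A0 ∈ Submodule.span ℝ (Sig '' Set.Iio m))
    (hperp : ∀ B ∈ Submodule.span ℝ (Sig '' Set.Iio m), (Aperp * B).trace / p = 0)
    (hdecomp : A = A0 + Aperp) :
    ((m.choose d : ℝ))⁻¹ *
        ∑ J ∈ (Finset.range m).powersetCard d, PaperDefs.gramDetExt p d Sig A J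
      = PaperDefs.Mavg (PaperDefs.gramG p Sig) m d * ((Aperp * Aperp).trace / p) := by
  have hterm : ∀ J ∈ (Finset.range m).powersetCard d,
      gramDetExt p d Sig A J = subdet (gramG p Sig) J * ((Aperp * Aperp).trace / p) := by
    intro J hJ
    obtain ⟨hJm, hcard⟩ := Finset.mem_powersetCard.mp hJ
    have hv : ∀ t, (Sig ∘ J.orderEmbOfFin hcard) t ∈ Submodule.span ℝ (Sig '' Set.Iio m) :=
      fun t => Submodule.subset_span
        ⟨_, Finset.mem_range.mp (hJm (J.orderEmbOfFin_mem hcard t)), rfl⟩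
    rw [gramDetExt_eq_det_gramMatrix p d Sig A hcard, subdet_gramG_eq_det_gramMatrix p d Sig hcard,
      det_gramMatrix_cons_of_finrank_eq _ hdim hv (by rwa [hdecomp, add_sub_cancel_right]) hperp,
      mul_comm, normalizedTraceForm_apply]
  rw [Finset.sum_congr rfl hterm, ← Finset.sum_mul, Mavg, mul_assoc]

/-- Lemma 2.3, determinant identity. With the same setting as Statement 13,
`M^{(d)}(Σ) = M^{(d)}·⟨Σ_⊥,Σ_⊥⟩`, where `M^{(d)}(Σ)` is the average over `d`-subsets `J`
of the determinants of the `(d+1)×(d+1)` Gram matrices of `(Σ,Σ_{i₁},…,Σ_{i_d})`. -/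
theorem statement14 (p m d : ℕ) (hp : 0 < p) (hd1 : 1 ≤ d) (hdm : d ≤ m)
    (Sig : ℕ → Matrix (Fin p) (Fin p) ℝ)
    (hsymm : ∀ i, i < m → (Sig i).IsSymm)
    (hdim : Module.finrank ℝ (Submodule.span ℝ (Sig '' Set.Iio m)) = d)
    (A A0 Aperp : Matrix (Fin p) (Fin p) ℝ)
    (hAsymm : A.IsSymm)
    (hA0 : A0 ∈ Submodule.span ℝ (Sig '' Set.Iio m))
    (hperp : ∀ B ∈ Submodule.span ℝ (Sig '' Set.Iio m), (Aperp * B).trace / p = 0)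
    (hdecomp : A = A0 + Aperp) :
    ((m.choose d : ℝ))⁻¹ *
        ∑ J ∈ (Finset.range m).powersetCard d, PaperDefs.gramDetExt p d Sig A J
      = PaperDefs.Mavg (PaperDefs.gramG p Sig) m d * ((Aperp * Aperp).trace / p) :=
  statement14_general p m d Sig hdim A A0 Aperp hA0 hperp hdecomp
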